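/- Let T > 0, L ≥ 0, let Q ∈ ℝ^{n×n} be positive semidefinite, let w : [0,T] → ℝ^n be L-square Lipschitz, and let δ, γ > 0 be such that γ = (ℓ+1)δ for some integer ℓ ≥ 0 and both T/δ and T/γ are positive integers. Then: (a) if δ · Σ_{k=0}^{T/δ−1} w(kδ)w(kδ)^T ≤ Q in the Loewner order, then γ · Σ_{k=0}^{T/γ−1} w(kγ)w(kγ)^T ≤ Q + (1/2)(γ−δ)TL·I_n; and (b) if γ · Σ_{k=0}^{T/γ−1} w(kγ)w(kγ)^T ≤ Q, then δ · Σ_{k=0}^{T/δ−1} w(kδ)w(kδ)^T ≤ Q + (1/2)(γ−δ)TL·I_n. -/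

import Mathlib

open MeasureTheory Matrix

noncomputable def opNorm {ι κ : Type} [Fintype ι] [Fintype κ] [DecidableEq κ]
    (M : Matrix ι κ ℝ) : ℝ :=
  ‖LinearMap.toContinuousLinearMap (Matrix.toEuclideanLin M)‖

noncomputable def euclNorm {ι : Type} [Fintype ι] (v : ι → ℝ) : ℝ :=
  Real.sqrt (∑ i, v i ^ 2)

/-- `v` is `L`-square Lipschitz on `[0,T]`. -/
def SqLipschitz {ι : Type} [Fintype ι] [DecidableEq ι] (T L : ℝ) (v : ℝ → ι → ℝ) : Prop :=
  ∀ t₁ ∈ Set.Icc (0:ℝ) T, ∀ t₂ ∈ Set.Icc (0:ℝ) T,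
    opNorm (Matrix.vecMulVec (v t₁) (v t₁) - Matrix.vecMulVec (v t₂) (v t₂)) ≤ L * |t₁ - t₂|

/-- The set of all partition sums appearing in the definition of total square variation. -/
def partitionSums {ι : Type} [Fintype ι] [DecidableEq ι] (T : ℝ) (v : ℝ → ι → ℝ) : Set ℝ :=
  { s | ∃ (N : ℕ) (t : Fin (N + 1) → ℝ), Monotone t ∧ t 0 = 0 ∧ t (Fin.last N) = T ∧
      s = ∑ i : Fin N, opNorm (Matrix.vecMulVec (v (t i.succ)) (v (t i.succ)) -
            Matrix.vecMulVec (v (t i.castSucc)) (v (t i.castSucc))) }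

/-- Total square variation `V_0^T(v)`. -/
noncomputable def totalSqVar {ι : Type} [Fintype ι] [DecidableEq ι] (T : ℝ) (v : ℝ → ι → ℝ) : ℝ :=
  sSup (partitionSums T v)

/-- `V_0^T(v) ≤ c`, phrased via all partition sums. -/
def TotalSqVarLE {ι : Type} [Fintype ι] [DecidableEq ι] (T : ℝ) (v : ℝ → ι → ℝ) (c : ℝ) : Prop :=
  ∀ s ∈ partitionSums T v, s ≤ c

/-- Loewner order `M ≤ N`. -/
def loewnerLE {ι : Type} [Fintype ι] (M N : Matrix ι ι ℝ) : Prop := (N - M).PosSemidef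

/-- Strict Loewner order `M < N`. -/
def loewnerLT {ι : Type} [Fintype ι] (M N : Matrix ι ι ℝ) : Prop := (N - M).PosDef

/-- `M` is negative definite. -/
def negDefQ {ι : Type} [Fintype ι] (M : Matrix ι ι ℝ) : Prop := (-M).PosDef

/-- Entrywise Lebesgue integral of a matrix-valued function on `[0,T]`. -/
noncomputable def matIntegral {ι κ : Type} (T : ℝ) (f : ℝ → Matrix ι κ ℝ) : Matrix ι κ ℝ :=
  Matrix.of fun i j => ∫ t in Set.Ioc (0:ℝ) T, f t i j

/-- `δ • Σ_{k<N} v(kδ) v(kδ)ᵀ`. -/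
noncomputable def sampledGram {ι : Type} [Fintype ι] (δ : ℝ) (N : ℕ) (v : ℝ → ι → ℝ) :
    Matrix ι ι ℝ :=
  δ • ∑ k ∈ Finset.range N, Matrix.vecMulVec (v (k * δ)) (v (k * δ))

/-- The noise signal `ẋ − Ax − Bu` associated with a candidate system `(A,B)`. -/
def noiseSig {n m : ℕ} (xdot x : ℝ → Fin n → ℝ) (u : ℝ → Fin m → ℝ)
    (A : Matrix (Fin n) (Fin n) ℝ) (B : Matrix (Fin n) (Fin m) ℝ) : ℝ → Fin n → ℝ :=
  fun t => xdot t - A.mulVec (x t) - B.mulVec (u t)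

/-- `Σ(Q')`: systems consistent with the continuous-time data. -/
def SigmaCont {n m : ℕ} (T : ℝ) (xdot x : ℝ → Fin n → ℝ) (u : ℝ → Fin m → ℝ)
    (Q' : Matrix (Fin n) (Fin n) ℝ) :
    Set (Matrix (Fin n) (Fin n) ℝ × Matrix (Fin n) (Fin m) ℝ) :=
  { AB | loewnerLE (matIntegral T fun t =>
      Matrix.vecMulVec (noiseSig xdot x u AB.1 AB.2 t) (noiseSig xdot x u AB.1 AB.2 t)) Q' }

/-- `Σ^δ(Q')`: systems consistent with the data sampled at stepsize `δ` (with `N = T/δ` samples). -/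
def SigmaDisc {n m : ℕ} (δ : ℝ) (N : ℕ) (xdot x : ℝ → Fin n → ℝ) (u : ℝ → Fin m → ℝ)
    (Q' : Matrix (Fin n) (Fin n) ℝ) :
    Set (Matrix (Fin n) (Fin n) ℝ × Matrix (Fin n) (Fin m) ℝ) :=
  { AB | loewnerLE (sampledGram δ N (noiseSig xdot x u AB.1 AB.2)) Q' }

/-- `M^L_{x,u}`: systems whose associated noise is `L`-square Lipschitz. -/
def Mset {n m : ℕ} (T L : ℝ) (xdot x : ℝ → Fin n → ℝ) (u : ℝ → Fin m → ℝ) :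
    Set (Matrix (Fin n) (Fin n) ℝ × Matrix (Fin n) (Fin m) ℝ) :=
  { AB | SqLipschitz T L (noiseSig xdot x u AB.1 AB.2) }

/-- `N^L_{x,u}`: systems whose associated noise has total square variation at most `LT/2`. -/
def Nset {n m : ℕ} (T L : ℝ) (xdot x : ℝ → Fin n → ℝ) (u : ℝ → Fin m → ℝ) :
    Set (Matrix (Fin n) (Fin n) ℝ × Matrix (Fin n) (Fin m) ℝ) :=
  { AB | TotalSqVarLE T (noiseSig xdot x u AB.1 AB.2) (L * T / 2) }

/-- The stacked signal `ξ(t) = (ẋ(t); −x(t); −u(t))`. -/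
def xiSig {n m : ℕ} (xdot x : ℝ → Fin n → ℝ) (u : ℝ → Fin m → ℝ) (t : ℝ) :
    (Fin n ⊕ (Fin n ⊕ Fin m)) → ℝ :=
  Sum.elim (xdot t) (Sum.elim (fun i => -(x t i)) (fun j => -(u t j)))

/-- The block matrix `[[Q + βI, P, PKᵀ], [P, 0, 0], [KP, 0, 0]]`. -/
noncomputable def lmiBlock {n m : ℕ} (Q P : Matrix (Fin n) (Fin n) ℝ)
    (K : Matrix (Fin m) (Fin n) ℝ) (β : ℝ) :
    Matrix (Fin n ⊕ (Fin n ⊕ Fin m)) (Fin n ⊕ (Fin n ⊕ Fin m)) ℝ :=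
  Matrix.fromBlocks (Q + β • (1 : Matrix (Fin n) (Fin n) ℝ))
    (Matrix.of fun i jj => Sum.elim (fun j => P i j) (fun j => (P * K.transpose) i j) jj)
    (Matrix.of fun ii j => Sum.elim (fun i => P i j) (fun k => (K * P) k j) ii)
    0

/-- The continuous-data LMI. -/
def ContLMI {n m : ℕ} (T : ℝ) (xdot x : ℝ → Fin n → ℝ) (u : ℝ → Fin m → ℝ)
    (Q P : Matrix (Fin n) (Fin n) ℝ) (K : Matrix (Fin m) (Fin n) ℝ) (β : ℝ) : Prop :=
  (matIntegral T (fun t => Matrix.vecMulVec (xiSig xdot x u t) (xiSig xdot x u t)) -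
    lmiBlock Q P K β).PosSemidef

/-- The sampled-data LMI at stepsize `δ` (with `N = T/δ` samples). -/
def SampLMI {n m : ℕ} (δ : ℝ) (N : ℕ) (xdot x : ℝ → Fin n → ℝ) (u : ℝ → Fin m → ℝ)
    (Q P : Matrix (Fin n) (Fin n) ℝ) (K : Matrix (Fin m) (Fin n) ℝ) (β : ℝ) : Prop :=
  (sampledGram δ N (xiSig xdot x u) - lmiBlock Q P K β).PosSemidef

/-! If `γ = (ℓ + 1) δ`, both sampled Grams split into `T/γ` blocks of `ℓ + 1` terms weighted by `δ`:
the coarse one repeats `w(jγ) w(jγ)ᵀ` in each block, the fine one uses `w(jγ + rδ) w(jγ + rδ)ᵀ`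
for `r ≤ ℓ`. By square Lipschitzness the `r`-th terms differ by at most `L r δ` in operator norm,
so the two Grams differ by at most `δ · (T/γ) · L δ ℓ(ℓ+1)/2 = (γ - δ) T L / 2`. A symmetric
matrix of operator norm at most `c` lies between `-c I` and `c I` in the Loewner order, which
transfers either bound to the other Gram at the cost of `c I`. -/

open scoped Matrix.Norms.L2Operator

section OperatorNorm

variable {ι : Type} [Fintype ι] [DecidableEq ι]

lemma opNorm_eq_norm (M : Matrix ι ι ℝ) : opNorm M = ‖M‖ := rfl

lemma dotProduct_mulVec_le_norm_mul (M : Matrix ι ι ℝ) (x : ι → ℝ) :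
    x ⬝ᵥ M *ᵥ x ≤ ‖M‖ * (x ⬝ᵥ x) := by
  set z : EuclideanSpace ℝ ι := WithLp.toLp 2 x
  have hz : ‖z‖ * ‖z‖ = x ⬝ᵥ x := by
    rw [← real_inner_self_eq_norm_mul_norm, EuclideanSpace.inner_eq_star_dotProduct]
    simp [z]
  calc x ⬝ᵥ M *ᵥ x = inner ℝ z (toEuclideanCLM (𝕜 := ℝ) M z) := (inner_toEuclideanCLM M z z).symm
    _ ≤ ‖z‖ * (‖M‖ * ‖z‖) :=
      (real_inner_le_norm _ _).trans (by gcongr; exact (toEuclideanCLM (𝕜 := ℝ) M).le_opNorm z)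
    _ = ‖M‖ * (x ⬝ᵥ x) := by rw [← hz]; ring

lemma posSemidef_smul_one_sub_of_norm_le {M : Matrix ι ι ℝ} {c : ℝ} (hM : M.IsHermitian)
    (hc : ‖M‖ ≤ c) : (c • (1 : Matrix ι ι ℝ) - M).PosSemidef := by
  refine .of_dotProduct_mulVec_nonneg ((isHermitian_one.smul (.all c)).sub hM) fun x => ?_
  have hx : 0 ≤ x ⬝ᵥ x := dotProduct_self_star_nonneg x
  have := (dotProduct_mulVec_le_norm_mul M x).trans (mul_le_mul_of_nonneg_right hc hx)
  simp only [star_trivial, sub_mulVec, smul_mulVec, one_mulVec, dotProduct_sub, dotProduct_smul,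
    smul_eq_mul]
  linarith

lemma loewnerLE_add_smul_one_of_norm_sub_le {A B Q : Matrix ι ι ℝ} {c : ℝ}
    (hA : A.IsHermitian) (hB : B.IsHermitian) (hAB : ‖A - B‖ ≤ c) (hBQ : loewnerLE B Q) :
    loewnerLE A (Q + c • (1 : Matrix ι ι ℝ)) := by
  have hsplit : Q + c • (1 : Matrix ι ι ℝ) - A = (Q - B) + (c • 1 - (A - B)) := by abel
  rw [loewnerLE, hsplit]
  exact hBQ.add (posSemidef_smul_one_sub_of_norm_le (hA.sub hB) hAB)

end OperatorNorm

lemma Finset.sum_range_mul_eq_sum_sum {β : Type} [AddCommMonoid β] (f : ℕ → β) (a b : ℕ) :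
    ∑ k ∈ range (a * b), f k = ∑ j ∈ range a, ∑ r ∈ range b, f (j * b + r) := by
  induction a with
  | zero => simp
  | succ a ih => rw [Nat.succ_mul, sum_range_add, ih, sum_range_succ]

lemma Finset.sum_range_natCast_mul_two {R : Type} [CommRing R] (n : ℕ) :
    (∑ r ∈ range n, (r : R)) * 2 = n * (n - 1) := by
  induction n with
  | zero => simp
  | succ n ih => rw [sum_range_succ, add_mul, ih]; push_cast; ring

section SampledGram

variable {ι : Type} [Fintype ι]

lemma sampledGram_isHermitian (δ : ℝ) (N : ℕ) (w : ℝ → ι → ℝ) :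
    (sampledGram δ N w).IsHermitian :=
  IsSelfAdjoint.smul (.all δ) (isSelfAdjoint_sum _ fun k _ =>
    (posSemidef_vecMulVec_self_star (w (k * δ))).isHermitian)

lemma sampledGram_mul_succ (δ : ℝ) (N ℓ : ℕ) (w : ℝ → ι → ℝ) :
    sampledGram δ (N * (ℓ + 1)) w = δ • ∑ j ∈ Finset.range N, ∑ r ∈ Finset.range (ℓ + 1),
      vecMulVec (w (j * ((ℓ + 1) * δ) + r * δ)) (w (j * ((ℓ + 1) * δ) + r * δ)) := by
  rw [sampledGram, Finset.sum_range_mul_eq_sum_sum]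
  congr 1
  refine Finset.sum_congr rfl fun j _ => Finset.sum_congr rfl fun r _ => ?_
  push_cast
  ring_nf

lemma sampledGram_succ_mul (δ : ℝ) (N ℓ : ℕ) (w : ℝ → ι → ℝ) :
    sampledGram ((ℓ + 1) * δ) N w = δ • ∑ j ∈ Finset.range N, ∑ _r ∈ Finset.range (ℓ + 1),
      vecMulVec (w (j * ((ℓ + 1) * δ))) (w (j * ((ℓ + 1) * δ))) := by
  simp only [sampledGram, Finset.sum_const, Finset.card_range, Finset.smul_sum, smul_smul,
    ← Nat.cast_smul_eq_nsmul ℝ]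
  push_cast
  ring_nf

lemma norm_sampledGram_sub_le [DecidableEq ι] {δ L : ℝ} (hδ : 0 ≤ δ) {N ℓ : ℕ} {w : ℝ → ι → ℝ}
    (hw : SqLipschitz (N * ((ℓ + 1) * δ)) L w) :
    ‖sampledGram ((ℓ + 1) * δ) N w - sampledGram δ (N * (ℓ + 1)) w‖ ≤
      ℓ * δ * (N * ((ℓ + 1) * δ)) * L / 2 := by
  set γ : ℝ := (ℓ + 1) * δ
  have hγ : 0 ≤ γ := mul_nonneg (by positivity) hδ
  have hterm : ∀ j ∈ Finset.range N, ∀ r ∈ Finset.range (ℓ + 1),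
      ‖vecMulVec (w (j * γ)) (w (j * γ)) - vecMulVec (w (j * γ + r * δ)) (w (j * γ + r * δ))‖
        ≤ L * (r * δ) := by
    intro j hj r hr
    have hj : (j : ℝ) + 1 ≤ N := by exact_mod_cast Finset.mem_range.mp hj
    have hr : (r : ℝ) ≤ ℓ := by exact_mod_cast Nat.lt_succ_iff.mp (Finset.mem_range.mp hr)
    have hjγ : j * γ + γ ≤ N * γ := by nlinarith
    have hrδ : r * δ ≤ γ := by nlinarith
    have := hw (j * γ) ⟨by positivity, by nlinarith⟩ (j * γ + r * δ) ⟨by positivity, by linarith⟩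
    rwa [opNorm_eq_norm, sub_add_cancel_left, abs_neg, abs_of_nonneg (by positivity)] at this
  rw [sampledGram_succ_mul, sampledGram_mul_succ, ← smul_sub, ← Finset.sum_sub_distrib,
    norm_smul, Real.norm_of_nonneg hδ]
  calc δ * ‖∑ j ∈ Finset.range N, (∑ r ∈ Finset.range (ℓ + 1), _ - ∑ r ∈ Finset.range (ℓ + 1), _)‖
      ≤ δ * ∑ j ∈ Finset.range N, ∑ r ∈ Finset.range (ℓ + 1), L * (r * δ) := by
        gcongr
        refine (norm_sum_le _ _).trans (Finset.sum_le_sum fun j hj => ?_)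
        rw [← Finset.sum_sub_distrib]
        exact (norm_sum_le _ _).trans (Finset.sum_le_sum (hterm j hj))
    _ = ℓ * δ * (N * γ) * L / 2 := by
        have hgauss := Finset.sum_range_natCast_mul_two (R := ℝ) (ℓ + 1)
        push_cast at hgauss
        simp only [Finset.sum_const, Finset.card_range, nsmul_eq_mul, ← Finset.mul_sum,
          ← Finset.sum_mul]
        linear_combination (N * L * δ ^ 2 / 2) * hgauss

end SampledGram

theorem stmt18_general {n : ℕ} (T L δ γ : ℝ) (hδ : 0 < δ)
    (ℓ : ℕ) (hγ : γ = (ℓ + 1) * δ)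
    (Nδ Nγ : ℕ) (hTδ : T = Nδ * δ) (hTγ : T = Nγ * γ)
    (Q : Matrix (Fin n) (Fin n) ℝ)
    (w : ℝ → Fin n → ℝ) (hw : SqLipschitz T L w) :
    (loewnerLE (sampledGram δ Nδ w) Q →
      loewnerLE (sampledGram γ Nγ w)
        (Q + ((γ - δ) * T * L / 2) • (1 : Matrix (Fin n) (Fin n) ℝ))) ∧
    (loewnerLE (sampledGram γ Nγ w) Q →
      loewnerLE (sampledGram δ Nδ w)
        (Q + ((γ - δ) * T * L / 2) • (1 : Matrix (Fin n) (Fin n) ℝ))) := by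
  obtain rfl : Nδ = Nγ * (ℓ + 1) := by
    have : (Nδ : ℝ) * δ = (Nγ * (ℓ + 1) : ℕ) * δ := by push_cast; rw [← hTδ, hTγ, hγ]; ring
    exact_mod_cast mul_right_cancel₀ hδ.ne' this
  subst hγ hTγ
  have hgap : ((ℓ + 1) * δ - δ) * (Nγ * ((ℓ + 1) * δ)) * L / 2
      = ℓ * δ * (Nγ * ((ℓ + 1) * δ)) * L / 2 := by ring
  have hD := norm_sampledGram_sub_le hδ.le hw
  rw [hgap]
  exact ⟨loewnerLE_add_smul_one_of_norm_sub_le (sampledGram_isHermitian _ _ _)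
      (sampledGram_isHermitian _ _ _) hD,
    loewnerLE_add_smul_one_of_norm_sub_le (sampledGram_isHermitian _ _ _)
      (sampledGram_isHermitian _ _ _) (by rwa [norm_sub_rev])⟩

theorem stmt18 {n : ℕ} (T L δ γ : ℝ) (hT : 0 < T) (hL : 0 ≤ L) (hδ : 0 < δ)
    (ℓ : ℕ) (hγ : γ = (ℓ + 1) * δ)
    (Nδ Nγ : ℕ) (hNδ : 0 < Nδ) (hNγ : 0 < Nγ) (hTδ : T = Nδ * δ) (hTγ : T = Nγ * γ)
    (Q : Matrix (Fin n) (Fin n) ℝ) (hQ : Q.PosSemidef)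
    (w : ℝ → Fin n → ℝ) (hw : SqLipschitz T L w) :
    (loewnerLE (sampledGram δ Nδ w) Q →
      loewnerLE (sampledGram γ Nγ w)
        (Q + ((γ - δ) * T * L / 2) • (1 : Matrix (Fin n) (Fin n) ℝ))) ∧
    (loewnerLE (sampledGram γ Nγ w) Q →
      loewnerLE (sampledGram δ Nδ w)
        (Q + ((γ - δ) * T * L / 2) • (1 : Matrix (Fin n) (Fin n) ℝ))) :=
  stmt18_general T L δ γ hδ ℓ hγ Nδ Nγ hTδ hTγ Q w hw
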